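/- arXiv:1711.03856 — 2 statements merged into one kernel-verified Lean document; each statement's English description precedes it below -/
import Mathlib

section
/- Let G be a finite simple graph on vertex set [m]_0 = {0, …, m−1} that contains a clique on the vertices {0, …, k−1} for some k ≥ 2 (i.e., K_k is a subgraph of G). Then for every n ≥ 1 the generalized Sierpiński graph S^n_G contains a subgraph isomorphic to the Sierpiński graph S^n_k. -/
/-! `S^n_G` is functorial in `G`: applying a graph homomorphism letterwise preserves every
clause of the adjacency relation. The clique on `{0, …, k−1}` is an injective homomorphism
`K_k →g G`, and letterwise application of an injective map is injective on words. -/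

/-- The generalized Sierpiński graph `S^n_G` of a base graph `G` on the vertex set
`[k]_0 = {0, …, k−1}`: the vertices are the words of length `n` over `[k]_0`, and two
distinct words `u, v` are adjacent iff there is an index `i` with `u j = v j` for `j < i`,
`u i` adjacent to `v i` in `G`, and `u j = v i`, `v j = u i` for all `j > i`. -/
def genSierpinski {k : ℕ} (G : SimpleGraph (Fin k)) (n : ℕ) :
    SimpleGraph (Fin n → Fin k) where
  Adj u v := ∃ i : Fin n,
    (∀ j, j < i → u j = v j) ∧ G.Adj (u i) (v i) ∧ ∀ j, i < j → u j = v i ∧ v j = u i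
  symm := by
    constructor
    rintro u v ⟨i, h1, h2, h3⟩
    exact ⟨i, fun j hj => (h1 j hj).symm, h2.symm, fun j hj => ⟨(h3 j hj).2, (h3 j hj).1⟩⟩
  loopless := by
    constructor
    rintro u ⟨i, -, h2, -⟩
    exact G.irrefl h2

/-- The Sierpiński graph `S^n_k`, i.e. the generalized Sierpiński graph of the complete
graph `K_k` on `[k]_0` (in which two vertices are adjacent iff they are distinct). -/
def sierpinski (k n : ℕ) : SimpleGraph (Fin n → Fin k) :=
  genSierpinski (⊤ : SimpleGraph (Fin k)) n

def SimpleGraph.Hom.genSierpinski {a b : ℕ} {G : SimpleGraph (Fin a)} {H : SimpleGraph (Fin b)}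
    (φ : G →g H) (n : ℕ) : _root_.genSierpinski G n →g _root_.genSierpinski H n where
  toFun u := φ ∘ u
  map_rel' := by
    rintro u v ⟨i, hlt, hadj, hgt⟩
    exact ⟨i, fun j hj => congrArg φ (hlt j hj), φ.map_adj hadj,
      fun j hj => ⟨congrArg φ (hgt j hj).1, congrArg φ (hgt j hj).2⟩⟩

theorem genSierpinski_contains_sierpinski_general (m k : ℕ) (hkm : k ≤ m)
    (G : SimpleGraph (Fin m))
    (hclique : ∀ i j : Fin m, (i : ℕ) < k → (j : ℕ) < k → i ≠ j → G.Adj i j)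
    (n : ℕ) :
    ∃ f : (Fin n → Fin k) → (Fin n → Fin m), Function.Injective f ∧
      ∀ u v, (sierpinski k n).Adj u v → (genSierpinski G n).Adj (f u) (f v) := by
  let φ : (⊤ : SimpleGraph (Fin k)) →g G :=
    ⟨Fin.castLE hkm, fun {i j} hij =>
      hclique _ _ i.isLt j.isLt (fun h => hij (Fin.castLE_injective hkm h))⟩
  exact ⟨φ.genSierpinski n, (Fin.castLE_injective hkm).comp_left,
    fun _ _ => (φ.genSierpinski n).map_adj⟩

/-- If a graph `G` on `[m]_0` contains a clique on the vertices `{0, …, k−1}` for some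
`k ≥ 2`, then for every `n ≥ 1` the generalized Sierpiński graph `S^n_G` contains a
subgraph isomorphic to the Sierpiński graph `S^n_k`. -/
theorem genSierpinski_contains_sierpinski (m k : ℕ) (hk : 2 ≤ k) (hkm : k ≤ m)
    (G : SimpleGraph (Fin m))
    (hclique : ∀ i j : Fin m, (i : ℕ) < k → (j : ℕ) < k → i ≠ j → G.Adj i j)
    (n : ℕ) (hn : 1 ≤ n) :
    ∃ f : (Fin n → Fin k) → (Fin n → Fin m), Function.Injective f ∧
      ∀ u v, (sierpinski k n).Adj u v → (genSierpinski G n).Adj (f u) (f v) :=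
  genSierpinski_contains_sierpinski_general m k hkm G hclique n
end

section
/- If a finite simple graph G contains a subgraph isomorphic to the complete graph K_k for some k ≥ 4, then the sequence (χρ(S^n_G))_{n ∈ ℕ} of packing chromatic numbers of the generalized Sierpiński graphs of G is unbounded from above. -/
/-- `c` is a `t`-packing coloring of `G`: every vertex gets a color in `{1, …, t}`, and any
two distinct vertices with the same color `i` are at distance greater than `i`
(equivalently, every walk between them has length greater than `i`). -/
def IsPackingColoring {V : Type*} (G : SimpleGraph V) (t : ℕ) (c : V → ℕ) : Prop :=
  (∀ v, 1 ≤ c v ∧ c v ≤ t) ∧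
    ∀ u v, u ≠ v → c u = c v → ∀ p : G.Walk u v, c u < p.length

/-- The packing chromatic number `χρ(G)`: the least `t` such that `G` admits a
`t`-packing coloring. -/
noncomputable def packingChromatic {V : Type*} (G : SimpleGraph V) : ℕ :=
  sInf {t | ∃ c : V → ℕ, IsPackingColoring G t c}

/-! A copy of `K₄` in `G` makes `S^n_4` a subgraph of `S^n_G`, and packing colorings restrict
to subgraphs. In `S^n_4` two words sharing their first `n - r` letters are joined by a walk of
length `< 2 ^ r`, so the color class `i` contains at most one word per prefix of length
`n - ⌊log₂ (i + 1)⌋`. The colors with `⌊log₂ (i + 1)⌋ = s` thus cover at most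
`2 ^ s * 4 ^ (n - s) = 4 ^ n / 2 ^ s` words, and `t` colors cover fewer than `4 ^ n` words
as long as `⌊log₂ (t + 1)⌋ ≤ n`. -/

open Finset SimpleGraph

namespace SimpleGraph.Copy

variable {k m : ℕ} {G : SimpleGraph (Fin k)} {H : SimpleGraph (Fin m)}

def genSierpinski (f : Copy G H) (n : ℕ) : Copy (genSierpinski G n) (genSierpinski H n) :=
  Hom.toCopy
    { toFun := fun u => f ∘ u
      map_rel' := fun ⟨i, hpre, hadj, hsuf⟩ =>
        ⟨i, fun j hj => congrArg f (hpre j hj), f.toHom.map_adj hadj,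
          fun j hj => ⟨congrArg f (hsuf j hj).1, congrArg f (hsuf j hj).2⟩⟩ }
    fun _ _ h => funext fun j => f.injective (congrFun h j)

end SimpleGraph.Copy

section PackingColoring

variable {V W : Type*} {G : SimpleGraph V} {t : ℕ} {c : V → ℕ}

lemma IsPackingColoring.mono {s : ℕ} (hc : IsPackingColoring G s c) (hst : s ≤ t) :
    IsPackingColoring G t c :=
  ⟨fun v => ⟨(hc.1 v).1, (hc.1 v).2.trans hst⟩, hc.2⟩

lemma IsPackingColoring.comap {H : SimpleGraph W} (f : Copy H G) (hc : IsPackingColoring G t c) :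
    IsPackingColoring H t (c ∘ f) :=
  ⟨fun w => hc.1 (f w), fun u v huv hcuv p => by
    simpa using hc.2 (f u) (f v) (f.injective.ne huv) hcuv (p.map f.toHom)⟩

lemma exists_isPackingColoring [Fintype V] (G : SimpleGraph V) :
    ∃ c, IsPackingColoring G (Fintype.card V) c :=
  ⟨fun v => Fintype.equivFin V v + 1, fun v => ⟨Nat.le_add_left 1 _, (Fintype.equivFin V v).isLt⟩,
    fun _ _ huv hc => absurd ((Fintype.equivFin V).injective (Fin.ext (by simpa using hc))) huv⟩

lemma lt_packingChromatic [Finite V] (h : ∀ c, ¬ IsPackingColoring G t c) :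
    t < packingChromatic G := by
  have := Fintype.ofFinite V
  by_contra! hle
  obtain ⟨c, hc⟩ := Nat.sInf_mem (s := {t | ∃ c, IsPackingColoring G t c})
    ⟨_, exists_isPackingColoring G⟩
  exact h c (hc.mono hle)

end PackingColoring

section Sierpinski

variable {k n : ℕ}

def replaceSuffix {α : Type*} (u : Fin n → α) (j : Fin n) (a : α) : Fin n → α :=
  fun i => if i ≤ j then u i else a

lemma genSierpinski_adj_replaceSuffix {G : SimpleGraph (Fin k)} {u v : Fin n → Fin k}
    {j : Fin n} (hpre : ∀ i, i < j → u i = v i) (hadj : G.Adj (u j) (v j)) :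
    (genSierpinski G n).Adj (replaceSuffix u j (v j)) (replaceSuffix v j (u j)) :=
  ⟨j, fun i hi => by simp [replaceSuffix, hi.le, hpre i hi], by simpa [replaceSuffix] using hadj,
    fun i hi => by simp [replaceSuffix, hi.not_ge]⟩

lemma sierpinski_exists_walk_length_lt {u v : Fin n → Fin k} (r : ℕ)
    (huv : ∀ i : Fin n, (i : ℕ) < n - r → u i = v i) :
    ∃ p : (sierpinski k n).Walk u v, p.length < 2 ^ r := by
  induction r generalizing u v with
  | zero =>
    obtain rfl : u = v := funext fun i => huv i (by omega)
    exact ⟨.nil, by simp⟩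
  | succ r ih =>
    by_cases h : ∀ i : Fin n, (i : ℕ) < n - r → u i = v i
    · obtain ⟨p, hp⟩ := ih h
      exact ⟨p, hp.trans_le (Nat.pow_le_pow_right two_pos r.le_succ)⟩
    push Not at h
    obtain ⟨j, hj, hne⟩ := h
    have hjr : n - (r + 1) ≤ j := by
      by_contra! hlt
      exact hne (huv j hlt)
    have hle : ∀ i : Fin n, (i : ℕ) < n - r → i ≤ j := fun i hi => by
      rw [Fin.le_def]
      omega
    obtain ⟨p, hp⟩ := ih (u := u) (v := replaceSuffix u j (v j)) fun i hi => by
      simp [replaceSuffix, hle i hi]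
    obtain ⟨q, hq⟩ := ih (u := replaceSuffix v j (u j)) (v := v) fun i hi => by
      simp [replaceSuffix, hle i hi]
    have hadj : (sierpinski k n).Adj (replaceSuffix u j (v j)) (replaceSuffix v j (u j)) :=
      genSierpinski_adj_replaceSuffix (fun i hi => huv i (by rw [Fin.lt_def] at hi; omega)) hne
    refine ⟨p.append (.cons hadj q), ?_⟩
    simp only [Walk.length_append, Walk.length_cons]
    rw [pow_succ]
    omega

lemma card_filter_eq_le_of_isPackingColoring {t : ℕ} {c : (Fin n → Fin k) → ℕ}
    (hc : IsPackingColoring (sierpinski k n) t c) (i : ℕ) :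
    #{u | c u = i} ≤ k ^ (n - Nat.log 2 (i + 1)) := by
  set r := Nat.log 2 (i + 1)
  have hr : 2 ^ r ≤ i + 1 := Nat.pow_log_le_self 2 (Nat.succ_ne_zero i)
  let pre : (Fin n → Fin k) → Fin (n - r) → Fin k := fun u j => u (Fin.castLE (n.sub_le r) j)
  -- a walk of length `< 2 ^ r ≤ i + 1` joins any two words with the same prefix
  have hinj : Set.InjOn pre {u | c u = i} := by
    intro u (hu : c u = i) v (hv : c v = i) huv
    by_contra hne
    obtain ⟨p, hp⟩ := sierpinski_exists_walk_length_lt r (fun j hj => congrFun huv ⟨j, hj⟩)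
    have := hc.2 u v hne (hu.trans hv.symm) p
    omega
  calc #{u | c u = i} ≤ #(univ : Finset (Fin (n - r) → Fin k)) :=
        card_le_card_of_injOn pre (by simp) (by simpa using hinj)
    _ = k ^ (n - r) := by simp

end Sierpinski

lemma sum_Ioc_four_pow_sub_log_add_two_pow {n R : ℕ} (hR : R ≤ n) :
    ∑ i ∈ Ioc 0 (2 ^ (R + 1) - 2), 4 ^ (n - Nat.log 2 (i + 1)) + 2 ^ (2 * n - R) = 4 ^ n := by
  induction R with
  | zero => simp [pow_mul]
  | succ R ih =>
    have hpow : 2 ^ (R + 2) = 2 * 2 ^ (R + 1) := by ring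
    have htwo : 2 ≤ 2 ^ (R + 1) := Nat.le_self_pow R.succ_ne_zero 2
    have hblock : ∑ i ∈ Ioc (2 ^ (R + 1) - 2) (2 ^ (R + 2) - 2), 4 ^ (n - Nat.log 2 (i + 1))
        = 2 ^ (R + 1) * 4 ^ (n - (R + 1)) := by
      rw [sum_congr rfl fun i hi => ?_, sum_const, Nat.card_Ioc, smul_eq_mul]
      · congr 1
        omega
      · rw [mem_Ioc] at hi
        rw [Nat.log_eq_of_pow_le_of_lt_pow (m := R + 1) (by omega) (by omega)]
    have hmerge : 2 ^ (R + 1) * 4 ^ (n - (R + 1)) = 2 ^ (2 * n - (R + 1)) := by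
      rw [show (4 : ℕ) = 2 ^ 2 by norm_num, ← pow_mul, ← pow_add]
      congr 1
      omega
    rw [← sum_Ioc_consecutive _ (Nat.zero_le _) (by omega : 2 ^ (R + 1) - 2 ≤ 2 ^ (R + 2) - 2),
      hblock, hmerge, ← ih (by omega), show 2 * n - R = 2 * n - (R + 1) + 1 by omega, pow_succ]
    ring

lemma sum_Icc_four_pow_sub_log_lt {n M : ℕ} (h : Nat.log 2 (M + 1) ≤ n) :
    ∑ i ∈ Icc 1 M, 4 ^ (n - Nat.log 2 (i + 1)) < 4 ^ n := by
  set R := Nat.log 2 (M + 1)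
  have hM : M + 1 < 2 ^ (R + 1) := Nat.lt_pow_succ_log_self one_lt_two _
  have hsub : Icc 1 M ⊆ Ioc 0 (2 ^ (R + 1) - 2) := fun i hi => by
    simp only [mem_Icc, mem_Ioc] at hi ⊢
    omega
  have := sum_Ioc_four_pow_sub_log_add_two_pow (n := n) h
  have := sum_le_sum_of_subset (f := fun i => 4 ^ (n - Nat.log 2 (i + 1))) hsub
  have := Nat.two_pow_pos (2 * n - R)
  omega

lemma not_isPackingColoring_sierpinski_four {n t : ℕ} (h : Nat.log 2 (t + 1) ≤ n)
    (c : (Fin n → Fin 4) → ℕ) : ¬ IsPackingColoring (sierpinski 4 n) t c := by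
  intro hc
  have hcount : 4 ^ n = ∑ i ∈ Icc 1 t, #{u | c u = i} := by
    rw [← card_eq_sum_card_fiberwise fun u _ => mem_Icc.2 (hc.1 u)]
    simp
  have := sum_le_sum fun i (_ : i ∈ Icc 1 t) => card_filter_eq_le_of_isPackingColoring hc i
  have := sum_Icc_four_pow_sub_log_lt h
  omega

/-- If a graph `G` contains a subgraph isomorphic to `K_k` for some `k ≥ 4`, then the
sequence `(χρ(S^n_G))_{n ∈ ℕ}` of packing chromatic numbers of the generalized
Sierpiński graphs of `G` is unbounded from above. -/
theorem packingChromatic_genSierpinski_unbounded (m k : ℕ) (hk : 4 ≤ k)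
    (G : SimpleGraph (Fin m))
    (hK : ∃ f : Fin k → Fin m, Function.Injective f ∧ ∀ i j, i ≠ j → G.Adj (f i) (f j))
    (M : ℕ) :
    ∃ n : ℕ, 1 ≤ n ∧ M < packingChromatic (genSierpinski G n) := by
  obtain ⟨f, hf_inj, hf_adj⟩ := hK
  let K₄ : Copy (⊤ : SimpleGraph (Fin 4)) G :=
    (Hom.toCopy ⟨f, hf_adj _ _⟩ hf_inj).comp (Embedding.completeGraph (Fin.castLEEmb hk)).toCopy
  refine ⟨M + 1, M.succ_pos, lt_packingChromatic fun c hc => ?_⟩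
  exact not_isPackingColoring_sierpinski_four (Nat.log_le_self 2 _) _
    (hc.comap (K₄.genSierpinski (M + 1)))
end
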